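/- The following hold: (1) rigid groups are torsion-free solvable groups; (2) torsion-free abelian groups are rigid; (3) subgroups of rigid groups are rigid; (4) a direct product of two groups, one of which is non-abelian, is not rigid; (5) non-abelian groups with non-trivial center are not rigid. -/

import Mathlib

/-!
STATEMENT 13 (Proposition, basic properties of rigid groups):
(1) rigid groups are torsion-free solvable groups;
(2) torsion-free abelian groups are rigid;
(3) subgroups of rigid groups are rigid;
(4) a direct product of two (nontrivial) groups, one of which is non-abelian, is not rigid;
(5) non-abelian groups with non-trivial center are not rigid.
-/

open scoped commutatorElement

/-- A principal series of length `n`: `s 0 = G ≥ ... ≥ s n = 1`, each term normal in `G`,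
strictly decreasing, with abelian factors `s i / s (i+1)` that are torsion-free as right
`ℤ[G / s i]`-modules (the module structure given by conjugation); the torsion-freeness is
expressed elementwise: a nonzero element of the group ring (given by representatives
`h j` of pairwise distinct cosets modulo `s i` and integer coefficients `m j`, not all zero)
applied to `c ∈ s i` lies in `s (i+1)` only if `c` does. -/
def IsPrincipalSeries {G : Type*} [Group G] {n : ℕ} (s : Fin (n + 1) → Subgroup G) : Prop :=
  s 0 = ⊤ ∧ s (Fin.last n) = ⊥ ∧
  (∀ i, (s i).Normal) ∧
  (∀ i : Fin n, s i.succ < s i.castSucc) ∧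
  (∀ i : Fin n, ∀ x ∈ s i.castSucc, ∀ y ∈ s i.castSucc, ⁅x, y⁆ ∈ s i.succ) ∧
  (∀ i : Fin n, ∀ c ∈ s i.castSucc, ∀ (k : ℕ) (h : Fin k → G) (m : Fin k → ℤ),
    (∀ j l : Fin k, j ≠ l → (h j)⁻¹ * h l ∉ s i.castSucc) →
    (∃ j, m j ≠ 0) →
    (List.ofFn fun j => ((h j)⁻¹ * c * h j) ^ m j).prod ∈ s i.succ →
    c ∈ s i.succ)

/-- A group is `n`-rigid if it has a principal series of length `n`. -/
def IsRigid (G : Type*) [Group G] (n : ℕ) : Prop :=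
  ∃ s : Fin (n + 1) → Subgroup G, IsPrincipalSeries s

/-- The family `t` of elements of `Gi` is linearly independent (in the factor `Gi/Gi1`)
over the group ring `ℤ[G/Gi]`, expressed elementwise. -/
def LinIndepMod {G : Type*} [Group G] (Gi Gi1 : Subgroup G) {k : ℕ} (t : Fin k → G) : Prop :=
  (∀ j, t j ∈ Gi) ∧
  ∀ (l : ℕ) (h : Fin k → Fin l → G) (m : Fin k → Fin l → ℤ),
    (∀ j, ∀ p q : Fin l, p ≠ q → (h j p)⁻¹ * h j q ∉ Gi) →
    (List.ofFn fun j : Fin k =>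
      (List.ofFn fun p : Fin l => ((h j p)⁻¹ * t j * h j p) ^ m j p).prod).prod ∈ Gi1 →
    ∀ j p, m j p = 0

/-- The rank of the factor `Gi/Gi1` as a `ℤ[G/Gi]`-module: the supremum of cardinalities
of linearly independent families. -/
noncomputable def rankAt {G : Type*} [Group G] (Gi Gi1 : Subgroup G) : ℕ∞ :=
  ⨆ (k : ℕ) (_ : ∃ t : Fin k → G, LinIndepMod Gi Gi1 t), (k : ℕ∞)

/-- `r_i(G)` computed from a principal series `s`. -/
noncomputable def seriesRank {G : Type*} [Group G] {n : ℕ} (s : Fin (n + 1) → Subgroup G)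
    (i : Fin n) : ℕ∞ :=
  rankAt (s i.castSucc) (s i.succ)

/-!
Every nontrivial element `c` of a rigid group has a *level*: the unique `i` with
`c ∈ G_i \ G_{i+1}`. Torsion-freeness of the factor `G_i / G_{i+1}` has two consequences:
`c ^ m ∈ G_{i+1}` forces `c ∈ G_{i+1}` (so `G` is torsion-free), and an element outside `G_i`
cannot commute with `c`. Hence commuting nontrivial elements have the same level. If a
nontrivial `z` commutes with `x`, `y` and `⁅x, y⁆`, where `x` and `y` do not commute, then `x`,
`y`, `⁅x, y⁆` and `z` all share one level `i`, while `⁅x, y⁆ ∈ G_{i+1}` because the factors are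
abelian: a contradiction. This rules out central elements in non-abelian rigid groups and
direct products with a non-abelian factor. Subgroups inherit the intersected series, which
becomes principal after deleting repetitions.
-/

section PrincipalFactor

variable {G : Type*} [Group G]

def IsPrincipalFactor (A B : Subgroup G) : Prop :=
  (∀ x ∈ A, ∀ y ∈ A, ⁅x, y⁆ ∈ B) ∧
  ∀ c ∈ A, ∀ (k : ℕ) (h : Fin k → G) (m : Fin k → ℤ),
    (∀ j l : Fin k, j ≠ l → (h j)⁻¹ * h l ∉ A) →
    (∃ j, m j ≠ 0) →
    (List.ofFn fun j => ((h j)⁻¹ * c * h j) ^ m j).prod ∈ B →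
    c ∈ B

namespace IsPrincipalFactor

variable {A B : Subgroup G}

theorem commutator_mem (hAB : IsPrincipalFactor A B) {x y : G} (hx : x ∈ A) (hy : y ∈ A) :
    ⁅x, y⁆ ∈ B :=
  hAB.1 x hx y hy

theorem mem_of_zpow_mem (hAB : IsPrincipalFactor A B) {c : G} (hc : c ∈ A) {m : ℤ}
    (hm : m ≠ 0) (hcm : c ^ m ∈ B) : c ∈ B := by
  refine hAB.2 c hc 1 ![1] ![m] (fun j l hjl => absurd (Subsingleton.elim j l) hjl) ⟨0, hm⟩ ?_
  simpa using hcm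

theorem mem_of_commute (hAB : IsPrincipalFactor A B) {c g : G} (hc : c ∈ A) (hg : g ∉ A)
    (hcg : Commute c g) : c ∈ B := by
  have hconj : g⁻¹ * c * g = c := by rw [mul_assoc, hcg.eq, inv_mul_cancel_left]
  -- `(1 - g)` kills the class of `c`
  refine hAB.2 c hc 2 ![1, g] ![1, -1] ?_ ⟨0, one_ne_zero⟩ ?_
  · intro j l hjl
    fin_cases j <;> fin_cases l
    all_goals first
      | exact absurd rfl hjl
      | simpa using hg
  · simp [List.ofFn_succ, hconj]

theorem comap {H : Type*} [Group H] (hAB : IsPrincipalFactor A B) (f : H →* G) :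
    IsPrincipalFactor (A.comap f) (B.comap f) := by
  refine ⟨fun x hx y hy => ?_, fun c hc k h m hdistinct hm hprod => ?_⟩
  · simpa [map_commutatorElement] using hAB.commutator_mem hx hy
  · refine hAB.2 (f c) hc k (f ∘ h) m (fun j l hjl => ?_) hm ?_
    · simpa using hdistinct j l hjl
    · simpa [map_list_prod, List.map_ofFn, Function.comp_def] using hprod

theorem top_bot_of_torsionFree {G : Type*} [CommGroup G]
    (htf : ∀ g : G, g ≠ 1 → ¬IsOfFinOrder g) : IsPrincipalFactor (⊤ : Subgroup G) ⊥ := by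
  refine ⟨fun x _ y _ => by simp [(Commute.all x y).commutator_eq], ?_⟩
  intro c _ k h m hdistinct ⟨j, hj⟩ hprod
  -- all cosets of `⊤` coincide, so the group-ring element has a single term
  obtain rfl : k = 1 := by
    by_contra hk
    have := j.pos
    exact hdistinct ⟨0, by omega⟩ ⟨1, by omega⟩ (by simp [Fin.ext_iff]) trivial
  obtain rfl : j = 0 := Subsingleton.elim _ _
  have hcm : c ^ m 0 = 1 := by simpa [List.ofFn_succ] using hprod
  by_contra hc
  exact htf c hc (isOfFinOrder_iff_zpow_eq_one.mpr ⟨m 0, hj, hcm⟩)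

end IsPrincipalFactor

end PrincipalFactor

section PrincipalSeries

variable {G : Type*} [Group G] {n : ℕ} {s : Fin (n + 1) → Subgroup G}

theorem isPrincipalSeries_iff : IsPrincipalSeries s ↔
    s 0 = ⊤ ∧ s (Fin.last n) = ⊥ ∧ (∀ i, (s i).Normal) ∧ StrictAnti s ∧
      ∀ i : Fin n, IsPrincipalFactor (s i.castSucc) (s i.succ) := by
  simp only [IsPrincipalSeries, IsPrincipalFactor, Fin.strictAnti_iff_succ_lt, forall_and]

namespace IsPrincipalSeries

variable (hs : IsPrincipalSeries s)
include hs

theorem strictAnti : StrictAnti s :=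
  (isPrincipalSeries_iff.mp hs).2.2.2.1

theorem factor (i : Fin n) : IsPrincipalFactor (s i.castSucc) (s i.succ) :=
  (isPrincipalSeries_iff.mp hs).2.2.2.2 i

theorem exists_mem_castSucc_not_mem_succ {c : G} (hc : c ≠ 1) :
    ∃ i : Fin n, c ∈ s i.castSucc ∧ c ∉ s i.succ := by
  suffices h : ∀ a, c ∈ s a → ∃ i : Fin n, c ∈ s i.castSucc ∧ c ∉ s i.succ from
    h 0 (hs.1 ▸ Subgroup.mem_top c)
  refine Fin.reverseInduction (fun hlast => (hc (Subgroup.mem_bot.mp (hs.2.1 ▸ hlast))).elim)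
    fun i ih hi => ?_
  by_cases hsucc : c ∈ s i.succ
  exacts [ih hsucc, ⟨i, hi, hsucc⟩]

theorem level_le_of_commute {c d : G} {i j : Fin n} (hc : c ∉ s i.succ) (hd : d ∈ s j.castSucc)
    (hd' : d ∉ s j.succ) (hcd : Commute c d) : j ≤ i := by
  by_contra! hij
  have hc' : c ∉ s j.castSucc := fun h =>
    hc (hs.strictAnti.antitone (Fin.succ_le_castSucc_iff.mpr hij) h)
  exact hd' ((hs.factor j).mem_of_commute hd hc' hcd.symm)

theorem level_eq_of_commute {c d : G} {i j : Fin n} (hc : c ∈ s i.castSucc) (hc' : c ∉ s i.succ)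
    (hd : d ∈ s j.castSucc) (hd' : d ∉ s j.succ) (hcd : Commute c d) : i = j :=
  le_antisymm (hs.level_le_of_commute hd' hc hc' hcd.symm) (hs.level_le_of_commute hc' hd hd' hcd)

theorem commute_of_commute_of_ne_one {x y z : G} (hz : z ≠ 1) (hzx : Commute z x)
    (hzy : Commute z y) (hzxy : Commute z ⁅x, y⁆) : Commute x y := by
  by_contra hxy
  have hx : x ≠ 1 := by rintro rfl; exact hxy (Commute.one_left y)
  have hy : y ≠ 1 := by rintro rfl; exact hxy (Commute.one_right x)
  have hw : ⁅x, y⁆ ≠ 1 := fun h => hxy (commutatorElement_eq_one_iff_commute.mp h)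
  obtain ⟨i, hzi, hzi'⟩ := hs.exists_mem_castSucc_not_mem_succ hz
  obtain ⟨ix, hxi, hxi'⟩ := hs.exists_mem_castSucc_not_mem_succ hx
  obtain ⟨iy, hyi, hyi'⟩ := hs.exists_mem_castSucc_not_mem_succ hy
  obtain ⟨iw, hwi, hwi'⟩ := hs.exists_mem_castSucc_not_mem_succ hw
  obtain rfl := hs.level_eq_of_commute hzi hzi' hxi hxi' hzx
  obtain rfl := hs.level_eq_of_commute hzi hzi' hyi hyi' hzy
  obtain rfl := hs.level_eq_of_commute hzi hzi' hwi hwi' hzxy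
  exact hwi' ((hs.factor i).commutator_mem hxi hyi)

theorem not_isOfFinOrder {g : G} (hg : g ≠ 1) : ¬IsOfFinOrder g := by
  intro hfin
  obtain ⟨m, hm, hgm⟩ := isOfFinOrder_iff_zpow_eq_one.mp hfin
  obtain ⟨i, hgi, hgi'⟩ := hs.exists_mem_castSucc_not_mem_succ hg
  exact hgi' ((hs.factor i).mem_of_zpow_mem hgi hm (hgm ▸ (s i.succ).one_mem))

theorem derivedSeries_le (i : Fin (n + 1)) : derivedSeries G i ≤ s i := by
  induction i using Fin.induction with
  | zero => exact hs.1 ▸ le_top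
  | succ i ih =>
    rw [Fin.val_succ, derivedSeries_succ, Subgroup.commutator_le]
    exact fun x hx y hy => (hs.factor i).commutator_mem (ih hx) (ih hy)

theorem isSolvable : Group.IsSolvable G :=
  ⟨⟨n, le_bot_iff.mp (hs.2.1 ▸ hs.derivedSeries_le (Fin.last n))⟩⟩

end IsPrincipalSeries

end PrincipalSeries

section Rigid

theorem isRigid_zero_of_subsingleton {G : Type*} [Group G] [Subsingleton G] : IsRigid G 0 :=
  ⟨fun _ => ⊤, isPrincipalSeries_iff.mpr
    ⟨rfl, Subsingleton.elim _ _, fun _ => inferInstance,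
      Fin.strictAnti_iff_succ_lt.mpr finZeroElim, finZeroElim⟩⟩

theorem exists_isRigid_of_torsionFree (G : Type*) [CommGroup G]
    (htf : ∀ g : G, g ≠ 1 → ¬IsOfFinOrder g) : ∃ n, IsRigid G n := by
  cases subsingleton_or_nontrivial G
  · exact ⟨0, isRigid_zero_of_subsingleton⟩
  · refine ⟨1, ![⊤, ⊥], isPrincipalSeries_iff.mpr ⟨rfl, rfl, ?_, ?_, ?_⟩⟩
    · intro i; fin_cases i <;> infer_instance
    · exact Fin.strictAnti_iff_succ_lt.mpr fun i => by fin_cases i; exact bot_lt_top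
    · intro i; fin_cases i; exact IsPrincipalFactor.top_bot_of_torsionFree htf

theorem exists_isRigid_of_antitone {G : Type*} [Group G] (n : ℕ) (u : ℕ → Subgroup G)
    (h0 : u 0 = ⊤) (hn : u n = ⊥) (hnormal : ∀ i, (u i).Normal)
    (hanti : ∀ i < n, u (i + 1) ≤ u i)
    (hfactor : ∀ i < n, IsPrincipalFactor (u i) (u (i + 1))) :
    ∃ k ≤ n, IsRigid G k := by
  induction n generalizing u with
  | zero =>
    have : Subsingleton G :=
      Subgroup.subsingleton_iff.mp (subsingleton_of_bot_eq_top (hn.symm.trans h0))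
    exact ⟨0, le_rfl, isRigid_zero_of_subsingleton⟩
  | succ n ih =>
    by_cases hstrict : ∀ i < n + 1, u (i + 1) < u i
    · exact ⟨n + 1, le_rfl, fun i => u i, isPrincipalSeries_iff.mpr ⟨h0, hn,
        fun i => hnormal i, Fin.strictAnti_iff_succ_lt.mpr fun i => hstrict i i.2,
        fun i => hfactor i i.2⟩⟩
    push Not at hstrict
    obtain ⟨i, hi, hui⟩ := hstrict
    have heq : u (i + 1) = u i := (hanti i hi).eq_of_not_lt hui
    set u' : ℕ → Subgroup G := fun j => u (if j ≤ i then j else j + 1) with hu'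
    have hstep : ∀ j < n, ∃ j' < n + 1, u' j = u j' ∧ u' (j + 1) = u (j' + 1) := by
      intro j hj
      rcases lt_trichotomy j i with hji | rfl | hji
      · exact ⟨j, by omega, by simp [hu', hji.le], by simp [hu', Nat.succ_le_of_lt hji]⟩
      · exact ⟨j + 1, by omega, by simp [hu', heq], by simp [hu']⟩
      · exact ⟨j + 1, by omega, by simp [hu', hji.not_ge],
          by simp [hu', (hji.trans j.lt_succ_self).not_ge]⟩
    have hn' : u' n = ⊥ := by
      by_cases hin : n ≤ i
      · obtain rfl : i = n := by omega
        simpa [hu', heq] using hn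
      · simp [hu', hin, hn]
    obtain ⟨k, hk, hrigid⟩ := ih u' (by simp [hu', h0]) hn' (fun j => hnormal _)
      (fun j hj => by obtain ⟨j', hj', h, h'⟩ := hstep j hj; exact h ▸ h' ▸ hanti j' hj')
      (fun j hj => by obtain ⟨j', hj', h, h'⟩ := hstep j hj; exact h ▸ h' ▸ hfactor j' hj')
    exact ⟨k, by omega, hrigid⟩

theorem IsRigid.exists_isRigid_subgroup {G : Type*} [Group G] {n : ℕ} (hG : IsRigid G n)
    (H : Subgroup G) : ∃ k ≤ n, IsRigid H k := by
  obtain ⟨s, hs⟩ := hG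
  obtain ⟨h0, hlast, hnormal, hanti, hfactor⟩ := isPrincipalSeries_iff.mp hs
  have hclamp : ∀ i (hi : i < n), Fin.clamp i n = Fin.castSucc ⟨i, hi⟩ ∧
      Fin.clamp (i + 1) n = Fin.succ ⟨i, hi⟩ := fun i hi =>
    ⟨Fin.ext (by simp; omega), Fin.ext (by simp; omega)⟩
  refine exists_isRigid_of_antitone n (fun i => (s (Fin.clamp i n)).comap H.subtype) ?_ ?_
    (fun i => (hnormal _).comap _) (fun i hi => ?_) (fun i hi => ?_)
  · simp [Fin.clamp, h0]
  · simp [show Fin.clamp n n = Fin.last n from Fin.ext (by simp), hlast]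
  · simp only [hclamp i hi]
    exact Subgroup.comap_mono (hanti Fin.castSucc_lt_succ).le
  · simp only [hclamp i hi]
    exact (hfactor _).comap _

theorem not_isRigid_of_center_ne_bot {G : Type*} [Group G] (hG : ¬∀ x y : G, x * y = y * x)
    (hZ : Subgroup.center G ≠ ⊥) (n : ℕ) : ¬IsRigid G n := by
  rintro ⟨s, hs⟩
  obtain ⟨z, hz, hz1⟩ := (Subgroup.center G).bot_or_exists_ne_one.resolve_left hZ
  have hzc : ∀ g, Commute z g := fun g => (Subgroup.mem_center_iff.mp hz g).symm
  exact hG fun x y => (hs.commute_of_commute_of_ne_one hz1 (hzc x) (hzc y) (hzc _)).eq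

theorem not_isRigid_prod {A B : Type*} [Group A] [Group B] [Nontrivial A]
    (hB : ¬∀ x y : B, x * y = y * x) (n : ℕ) : ¬IsRigid (A × B) n := by
  rintro ⟨s, hs⟩
  obtain ⟨a, ha⟩ := exists_ne (1 : A)
  refine hB fun b₁ b₂ => ?_
  have hcomm : Commute (MonoidHom.inr A B b₁) (MonoidHom.inr A B b₂) :=
    hs.commute_of_commute_of_ne_one (z := MonoidHom.inl A B a) (by simpa using ha)
      (MonoidHom.commute_inl_inr _ _) (MonoidHom.commute_inl_inr _ _)
      (map_commutatorElement (MonoidHom.inr A B) b₁ b₂ ▸ MonoidHom.commute_inl_inr _ _)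
  simpa using (hcomm.map (MonoidHom.snd A B)).eq

end Rigid

theorem stmt13 :
    (∀ (G : Type) [Group G] (n : ℕ), IsRigid G n →
      (∀ g : G, g ≠ 1 → ¬IsOfFinOrder g) ∧ IsSolvable G) ∧
    (∀ (G : Type) [CommGroup G], (∀ g : G, g ≠ 1 → ¬IsOfFinOrder g) → ∃ n, IsRigid G n) ∧
    (∀ (G : Type) [Group G] (n : ℕ), IsRigid G n →
      ∀ H : Subgroup G, ∃ k ≤ n, IsRigid H k) ∧
    (∀ (A B : Type) [Group A] [Group B], Nontrivial A →
      (¬ ∀ x y : B, x * y = y * x) → ∀ n, ¬ IsRigid (A × B) n) ∧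
    (∀ (G : Type) [Group G], (¬ ∀ x y : G, x * y = y * x) →
      Subgroup.center G ≠ ⊥ → ∀ n, ¬ IsRigid G n) := by
  refine ⟨?_, exists_isRigid_of_torsionFree, fun G _ n hG => hG.exists_isRigid_subgroup,
    fun A B _ _ _ hB => not_isRigid_prod hB, fun G _ => not_isRigid_of_center_ne_bot⟩
  rintro G _ n ⟨s, hs⟩
  exact ⟨fun g => hs.not_isOfFinOrder, hs.isSolvable⟩
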